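/- Let F ⊆ G be prime lattice filters of an MV-algebra L with K(F) = K(G). Then K(F ⊸ G) = K(F). -/

import Mathlib

/-- An MV-algebra: a commutative monoid `(L, ⊕, 0)` with a unary `¬` satisfying
`¬¬x = x`, `x ⊕ ¬0 = ¬0` and `¬(¬x ⊕ y) ⊕ y = ¬(¬y ⊕ x) ⊕ x`. -/
class MV (L : Type*) where
  add : L → L → L
  zero : L
  neg : L → L
  add_assoc : ∀ x y z : L, add (add x y) z = add x (add y z)
  add_comm : ∀ x y : L, add x y = add y x
  add_zero : ∀ x : L, add x zero = x
  neg_neg : ∀ x : L, neg (neg x) = x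
  add_neg_zero : ∀ x : L, add x (neg zero) = neg zero
  luk : ∀ x y : L, add (neg (add (neg x) y)) y = add (neg (add (neg y) x)) x

namespace MV

variable {L : Type*} [MV L]

/-- `1 = ¬0`. -/
def one : L := neg zero

/-- `x → y = ¬x ⊕ y`. -/
def imp (x y : L) : L := add (neg x) y

/-- `x ⊗ y = ¬(¬x ⊕ ¬y)`. -/
def otimes (x y : L) : L := neg (add (neg x) (neg y))

/-- `x ∨ y = (x → y) → y`. -/
def join (x y : L) : L := imp (imp x y) y

/-- `x ∧ y = ¬(¬x ∨ ¬y)`. -/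
def meet (x y : L) : L := neg (join (neg x) (neg y))

/-- `x ≤ y` iff `x → y = 1`. -/
def le (x y : L) : Prop := imp x y = one

/-- `x < y` iff `x ≤ y` and `x ≠ y`. -/
def lt (x y : L) : Prop := le x y ∧ x ≠ y

/-- A lattice filter: nonempty, upward closed, closed under `∧`. -/
def IsLatticeFilter (F : Set L) : Prop :=
  F.Nonempty ∧ (∀ x y : L, x ∈ F → le x y → y ∈ F) ∧
    (∀ x y : L, x ∈ F → y ∈ F → meet x y ∈ F)

/-- A prime lattice filter: a proper lattice filter such that
`x ∨ y ∈ F` implies `x ∈ F` or `y ∈ F`. -/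
def IsPrimeFilter (F : Set L) : Prop :=
  IsLatticeFilter F ∧ F ≠ Set.univ ∧ ∀ x y : L, join x y ∈ F → x ∈ F ∨ y ∈ F

/-- `F ⊸ G = {z | ∀ a ∉ G, z → a ∉ F}` (intended for `F ⊆ G`). -/
def lolli (F G : Set L) : Set L := {z | ∀ a ∉ G, imp z a ∉ F}

/-- The general `F ⊸ G = (F ∩ G) ⊸ G`. -/
def lolli' (F G : Set L) : Set L := lolli (F ∩ G) G

/-- The kernel `K(F) = {z | ∀ a ∉ F, z → a ∉ F}`. -/
def ker (F : Set L) : Set L := {z | ∀ a ∉ F, imp z a ∉ F}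

/-- `F⁺ = {z | ¬z ∉ F}`. -/
def plus (F : Set L) : Set L := {z | neg z ∉ F}

/-- An implication filter: contains `1` and is closed under modus ponens. -/
def IsImplicationFilter (P : Set L) : Prop :=
  (one : L) ∈ P ∧ ∀ x y : L, x ∈ P → imp x y ∈ P → y ∈ P

/-- `x ~_P y` iff `x → y ∈ P` and `y → x ∈ P`. -/
def simP (P : Set L) (x y : L) : Prop := imp x y ∈ P ∧ imp y x ∈ P

/-- `J_u(F, P) = {z | ∃ f ∈ F, z ~_P f}`. -/
def Ju (F P : Set L) : Set L := {z | ∃ f ∈ F, simP P z f}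

/-- `J_d(F, P) = (J_u(F⁺, P))⁺`. -/
def Jd (F P : Set L) : Set L := plus (Ju (plus F) P)

end MV

/-!
The kernel `K = K(F) = K(G)` is upward closed and closed under `⊙`, both `F` and `G` are
saturated for the preorder `x ⇒ y ∈ K`, and since `F` is prime this preorder is total by
prelinearity `(x ⇒ y) ∨ (y ⇒ x) = 1`. The inclusion `K(G) ⊆ K(F ⊸ G)` is immediate. Conversely,
let `z ∈ K(H)` with `H = F ⊸ G`, and suppose `x = f₀ ⊙ z ∉ F` and `g₀ ⊙ z ∉ G` for some `f₀ ∈ F`,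
`g₀ ∈ G`. If `x ⇒ g₀ ∈ K`, then `x ⊙ z = f₀ ⊙ (z ⊙ z) ∈ G` forces `g₀ ⊙ z ∈ G`. Otherwise
`g₀ ⇒ x ∈ K`; as `x` lies below all of `F` modulo `K`, this gives `x ⇒ g₀ ∈ H`, hence
`(x ⇒ g₀) ⊙ z ⊙ z ∈ H`, and `G` contains `x ⊙ (x ⇒ g₀) ⊙ z ≤ g₀ ⊙ z`. Both cases contradict the
choice of `g₀`.
-/

namespace MV

variable {L : Type*} [MV L]

local infixl:70 " ⊙ " => otimes
local infixr:60 " ⇒ " => imp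
local infix:50 " ≼ " => le

theorem add_one (x : L) : add x one = one := MV.add_neg_zero x

theorem zero_add (x : L) : add zero x = x := by
  rw [MV.add_comm]; exact MV.add_zero x

theorem neg_one : neg (one : L) = zero := MV.neg_neg zero

theorem add_left_comm (x y z : L) : add x (add y z) = add y (add x z) := by
  rw [← MV.add_assoc, MV.add_comm x y, MV.add_assoc]

theorem neg_add_self (x : L) : add (neg x) x = one := by
  simpa only [add_one, neg_one, zero_add] using (MV.luk x one).symm

theorem one_imp (x : L) : one ⇒ x = x := by
  rw [imp, neg_one, zero_add]

theorem le_refl (x : L) : x ≼ x := neg_add_self x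

theorem eq_one_of_one_le {x : L} (h : one ≼ x) : x = one := by
  rwa [le, one_imp] at h

theorem join_comm (x y : L) : join x y = join y x := MV.luk x y

theorem join_eq_of_le {x y : L} (h : x ≼ y) : join y x = y := by
  rw [join_comm, join, h, one_imp]

theorem le_trans {x y z : L} (hxy : x ≼ y) (hyz : y ≼ z) : x ≼ z := by
  change add (neg x) z = one
  rw [← join_eq_of_le hyz, join, imp, add_left_comm, show add (neg x) y = one from hxy, add_one]

theorem neg_le_neg {x y : L} (h : x ≼ y) : neg y ≼ neg x := by
  change add (neg (neg y)) (neg x) = one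
  rw [MV.neg_neg, MV.add_comm]
  exact h

theorem otimes_comm (x y : L) : x ⊙ y = y ⊙ x := by
  rw [otimes, otimes, MV.add_comm]

theorem otimes_assoc (x y z : L) : x ⊙ y ⊙ z = x ⊙ (y ⊙ z) := by
  simp only [otimes, MV.neg_neg, MV.add_assoc]

theorem otimes_left_comm (x y z : L) : x ⊙ (y ⊙ z) = y ⊙ (x ⊙ z) := by
  rw [← otimes_assoc, otimes_comm x y, otimes_assoc]

theorem otimes_one (x : L) : x ⊙ one = x := by
  rw [otimes, neg_one, MV.add_zero, MV.neg_neg]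

theorem one_otimes (x : L) : one ⊙ x = x := by
  rw [otimes_comm, otimes_one]

theorem neg_imp (x y : L) : neg (x ⇒ y) = x ⊙ neg y := by
  rw [imp, otimes, MV.neg_neg]

theorem otimes_imp (x y z : L) : x ⊙ y ⇒ z = x ⇒ y ⇒ z := by
  simp only [imp, otimes, MV.neg_neg, MV.add_assoc]

theorem otimes_le_iff_le_imp {x y z : L} : x ⊙ y ≼ z ↔ x ≼ y ⇒ z := by
  rw [le, le, otimes_imp]

theorem otimes_imp_le (x y : L) : (x ⇒ y) ⊙ x ≼ y :=
  otimes_le_iff_le_imp.2 (le_refl _)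

theorem otimes_imp_le' (x y : L) : x ⊙ (x ⇒ y) ≼ y := by
  rw [otimes_comm]; exact otimes_imp_le x y

theorem le_imp_otimes (x y : L) : x ≼ y ⇒ x ⊙ y :=
  otimes_le_iff_le_imp.1 (le_refl _)

theorem otimes_le_otimes_right {x y : L} (w : L) (h : x ≼ y) : x ⊙ w ≼ y ⊙ w :=
  otimes_le_iff_le_imp.2 (le_trans h (le_imp_otimes y w))

theorem otimes_le_otimes_left {x y : L} (w : L) (h : x ≼ y) : w ⊙ x ≼ w ⊙ y := by
  rw [otimes_comm w, otimes_comm w]; exact otimes_le_otimes_right w h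

theorem imp_le_imp_left {x y : L} (w : L) (h : x ≼ y) : y ⇒ w ≼ x ⇒ w :=
  otimes_le_iff_le_imp.1 (le_trans (otimes_le_otimes_left _ h) (otimes_imp_le y w))

theorem imp_le_imp_otimes (x y w : L) : x ⇒ y ≼ x ⊙ w ⇒ y ⊙ w := by
  rw [← otimes_le_iff_le_imp, ← otimes_assoc]
  exact otimes_le_otimes_right w (otimes_imp_le x y)

theorem otimes_imp_imp_le (x y z : L) : (x ⇒ y) ⊙ (y ⇒ z) ≼ x ⇒ z := by
  rw [← otimes_le_iff_le_imp, otimes_comm (x ⇒ y), otimes_assoc]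
  exact le_trans (otimes_le_otimes_left _ (otimes_imp_le x y)) (otimes_imp_le y z)

theorem otimes_imp_comm (x y : L) : x ⊙ (x ⇒ y) = y ⊙ (y ⇒ x) := by
  have h := MV.luk (neg y) (neg x)
  rw [MV.neg_neg, MV.neg_neg, MV.add_comm y, MV.add_comm x] at h
  rw [otimes, otimes, imp, imp, MV.add_comm (neg x), MV.add_comm (neg y), h]

theorem join_eq_add (x y : L) : join x y = add (x ⊙ neg y) y := by
  rw [join, imp, neg_imp]

theorem le_join_left (x y : L) : x ≼ join x y := by
  change add (neg x) (add (neg (x ⇒ y)) y) = one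
  rw [add_left_comm]
  exact neg_add_self (x ⇒ y)

theorem le_imp_right (x y : L) : y ≼ x ⇒ y := by
  change add (neg y) (add (neg x) y) = one
  rw [add_left_comm, neg_add_self, add_one]

theorem le_join_right (x y : L) : y ≼ join x y := le_imp_right (x ⇒ y) y

theorem join_imp (x y : L) : join x y ⇒ y = x ⇒ y := join_eq_of_le (le_imp_right x y)

theorem join_le {x y z : L} (hx : x ≼ z) (hy : y ≼ z) : join x y ≼ z := by
  change add (neg (join x y)) z = one
  rw [← join_eq_of_le hy]
  change add (neg (join x y)) (add (neg (z ⇒ y)) y) = one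
  rw [add_left_comm, show add (neg (join x y)) y = x ⇒ y from join_imp x y]
  change add (neg (z ⇒ y)) (add (neg x) y) = one
  rw [add_left_comm, show add (neg (z ⇒ y)) y = z from join_eq_of_le hy]
  exact hx

theorem join_le_join {x y x' y' : L} (hx : x ≼ x') (hy : y ≼ y') : join x y ≼ join x' y' :=
  join_le (le_trans hx (le_join_left x' y')) (le_trans hy (le_join_right x' y'))

theorem join_imp_imp_eq_one (x y : L) : join (x ⇒ y) (y ⇒ x) = one := by
  set d := join x y
  have hd : d ⊙ (d ⇒ x) = x := by
    rw [otimes_imp_comm, show x ⇒ d = one from le_join_left x y, otimes_one]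
  have hdd : join (d ⇒ x) (d ⇒ y) = one := by
    rw [join_eq_add, neg_imp, ← otimes_assoc, otimes_comm (d ⇒ x), hd, imp, add_left_comm,
      ← join_eq_add]
    exact neg_add_self d
  have hle : join (d ⇒ x) (d ⇒ y) ≼ join (y ⇒ x) (x ⇒ y) :=
    join_le_join (imp_le_imp_left x (le_join_right x y)) (imp_le_imp_left y (le_join_left x y))
  rw [hdd] at hle
  rw [join_comm]
  exact eq_one_of_one_le hle

theorem meet_le_left (x y : L) : meet x y ≼ x := by
  have h := neg_le_neg (le_join_left (neg x) (neg y))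
  rwa [MV.neg_neg] at h

theorem meet_le_right (x y : L) : meet x y ≼ y := by
  have h := neg_le_neg (le_join_right (neg x) (neg y))
  rwa [MV.neg_neg] at h

theorem otimes_join_le (w x y : L) : join x y ⊙ w ≼ join (x ⊙ w) (y ⊙ w) :=
  otimes_le_iff_le_imp.2 <| join_le (otimes_le_iff_le_imp.1 (le_join_left _ _))
    (otimes_le_iff_le_imp.1 (le_join_right _ _))

theorem le_join_imp_otimes (f x y : L) : f ≼ join ((x ⇒ y) ⊙ f) ((y ⇒ x) ⊙ f) := by
  simpa only [join_imp_imp_eq_one, one_otimes] using otimes_join_le f (x ⇒ y) (y ⇒ x)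

def IsUpClosed (F : Set L) : Prop := ∀ x y : L, x ∈ F → x ≼ y → y ∈ F

theorem IsLatticeFilter.isUpClosed {F : Set L} (hF : IsLatticeFilter F) : IsUpClosed F := hF.2.1

section Filters

variable {F G : Set L}

theorem mem_lolli_iff (hF : IsUpClosed F) (hG : IsUpClosed G) {z : L} :
    z ∈ lolli F G ↔ ∀ x ∈ F, x ⊙ z ∈ G := by
  constructor
  · intro hz x hx
    by_contra hxz
    exact hz _ hxz (hF _ _ hx (le_imp_otimes x z))
  · intro h a ha hza
    exact ha (hG _ _ (h _ hza) (otimes_imp_le z a))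

theorem mem_ker_iff (hF : IsUpClosed F) {z : L} : z ∈ ker F ↔ ∀ x ∈ F, x ⊙ z ∈ F :=
  mem_lolli_iff hF hF

theorem lolli_isUpClosed (hF : IsUpClosed F) : IsUpClosed (lolli F G) :=
  fun _ _ hx hxy a ha hya => hx a ha (hF _ _ hya (imp_le_imp_left a hxy))

theorem one_mem_lolli (hFG : F ⊆ G) : one ∈ lolli F G :=
  fun a ha h => ha (hFG (by rwa [one_imp] at h))

theorem ker_isUpClosed (hF : IsUpClosed F) : IsUpClosed (ker F) := lolli_isUpClosed hF

theorem otimes_mem_ker (hF : IsUpClosed F) {x y : L} (hx : x ∈ ker F) (hy : y ∈ ker F) :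
    x ⊙ y ∈ ker F := by
  rw [mem_ker_iff hF] at hx hy ⊢
  intro f hf
  rw [← otimes_assoc]
  exact hy _ (hx _ hf)

theorem imp_mem_ker_trans (hF : IsUpClosed F) {x y z : L} (hxy : x ⇒ y ∈ ker F)
    (hyz : y ⇒ z ∈ ker F) : x ⇒ z ∈ ker F :=
  ker_isUpClosed hF _ _ (otimes_mem_ker hF hxy hyz) (otimes_imp_imp_le x y z)

theorem otimes_imp_otimes_mem_ker (hF : IsUpClosed F) {x y : L} (w : L) (h : x ⇒ y ∈ ker F) :
    x ⊙ w ⇒ y ⊙ w ∈ ker F :=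
  ker_isUpClosed hF _ _ h (imp_le_imp_otimes x y w)

theorem mem_of_imp_mem_ker (hF : IsUpClosed F) {x y : L} (hx : x ∈ F) (h : x ⇒ y ∈ ker F) :
    y ∈ F :=
  hF _ _ ((mem_ker_iff hF).1 h x hx) (otimes_imp_le' x y)

theorem imp_mem_ker_or_imp_mem_ker (hF : IsPrimeFilter F) (x y : L) :
    x ⇒ y ∈ ker F ∨ y ⇒ x ∈ ker F := by
  have hup := hF.1.isUpClosed
  by_contra! ⟨hxy, hyx⟩
  simp only [mem_ker_iff hup, not_forall, exists_prop] at hxy hyx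
  obtain ⟨f₁, hf₁, h₁⟩ := hxy
  obtain ⟨f₂, hf₂, h₂⟩ := hyx
  have hf : meet f₁ f₂ ∈ F := hF.1.2.2 _ _ hf₁ hf₂
  rcases hF.2.2 _ _ (hup _ _ hf (le_join_imp_otimes _ x y)) with h | h
  · refine h₁ (hup _ _ h ?_)
    rw [otimes_comm f₁]
    exact otimes_le_otimes_left _ (meet_le_left f₁ f₂)
  · refine h₂ (hup _ _ h ?_)
    rw [otimes_comm f₂]
    exact otimes_le_otimes_left _ (meet_le_right f₁ f₂)

theorem imp_mem_ker_of_notMem_of_mem (hF : IsPrimeFilter F) {x y : L} (hx : x ∉ F)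
    (hy : y ∈ F) : x ⇒ y ∈ ker F :=
  (imp_mem_ker_or_imp_mem_ker hF x y).resolve_right
    fun h => hx (mem_of_imp_mem_ker hF.1.isUpClosed hy h)

theorem ker_subset_ker_lolli (hF : IsUpClosed F) (hG : IsUpClosed G) :
    ker G ⊆ ker (lolli F G) := by
  intro y hy
  rw [mem_ker_iff (lolli_isUpClosed hF)]
  intro h hh
  rw [mem_lolli_iff hF hG] at hh ⊢
  intro x hx
  rw [← otimes_assoc]
  exact (mem_ker_iff hG).1 hy _ (hh x hx)

theorem imp_mem_lolli_of_imp_mem_ker (hF : IsPrimeFilter F) (hG : IsUpClosed G)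
    (hker : ker F = ker G) {x g : L} (hx : x ∉ F) (hg : g ∈ G) (hgx : g ⇒ x ∈ ker F) :
    x ⇒ g ∈ lolli F G := by
  have hup := hF.1.isUpClosed
  rw [mem_lolli_iff hup hG]
  intro f hf
  have h₁ : g ⇒ x ⊙ (x ⇒ g) ∈ ker F := by
    rw [otimes_imp_comm]
    refine ker_isUpClosed hup _ _ hgx ?_
    rw [otimes_comm g]
    exact le_imp_otimes _ _
  have h₂ : x ⊙ (x ⇒ g) ⇒ f ⊙ (x ⇒ g) ∈ ker F :=
    otimes_imp_otimes_mem_ker hup _ (imp_mem_ker_of_notMem_of_mem hF hx hf)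
  exact mem_of_imp_mem_ker hG hg (hker ▸ imp_mem_ker_trans hup h₁ h₂)

theorem ker_lolli_subset_ker (hF : IsPrimeFilter F) (hG : IsUpClosed G) (hFG : F ⊆ G)
    (hker : ker F = ker G) : ker (lolli F G) ⊆ ker F := by
  have hup := hF.1.isUpClosed
  intro z hz
  have hmul : ∀ h ∈ lolli F G, h ⊙ z ∈ lolli F G := (mem_ker_iff (lolli_isUpClosed hup)).1 hz
  by_contra hzF
  obtain ⟨f₀, hf₀, hf₀z⟩ : ∃ f₀ ∈ F, f₀ ⊙ z ∉ F := by
    simpa only [mem_ker_iff hup, not_forall, exists_prop] using hzF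
  obtain ⟨g₀, hg₀, hg₀z⟩ : ∃ g₀ ∈ G, g₀ ⊙ z ∉ G := by
    simpa only [hker, mem_ker_iff hG, not_forall, exists_prop] using hzF
  set x := f₀ ⊙ z
  rcases imp_mem_ker_or_imp_mem_ker hF x g₀ with hxg | hgx
  · have hzz : z ⊙ z ∈ lolli F G := by
      simpa only [one_otimes] using hmul _ (hmul _ (one_mem_lolli hFG))
    have hxz : x ⊙ z ∈ G := by
      simpa only [x, otimes_assoc] using (mem_lolli_iff hup hG).1 hzz f₀ hf₀
    exact hg₀z (mem_of_imp_mem_ker hG hxz (hker ▸ otimes_imp_otimes_mem_ker hup z hxg))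
  · have h := (mem_lolli_iff hup hG).1
      (hmul _ (hmul _ (imp_mem_lolli_of_imp_mem_ker hF hG hker hf₀z hg₀ hgx))) f₀ hf₀
    have hxz : x ⊙ (x ⇒ g₀) ⊙ z ∈ G := by
      convert h using 1
      simp only [x, otimes_assoc, otimes_left_comm, otimes_comm]
    exact hg₀z (hG _ _ hxz (otimes_le_otimes_right z (otimes_imp_le' x g₀)))

end Filters

end MV

open MV

/-- For prime lattice filters `F ⊆ G` with `K(F) = K(G)`,
`K(F ⊸ G) = K(F)`. -/
theorem stmt_14 {L : Type*} [MV L] (F G : Set L)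
    (hF : IsPrimeFilter F) (hG : IsPrimeFilter G) (hFG : F ⊆ G)
    (hker : ker F = ker G) :
    ker (lolli F G) = ker F :=
  (ker_lolli_subset_ker hF hG.1.isUpClosed hFG hker).antisymm
    (hker ▸ ker_subset_ker_lolli hF.1.isUpClosed hG.1.isUpClosed)
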